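/- In $\mathbb{R}^d$ with $d \ge 2$ and $k$ with $1 \le k \le d-1$, define $A_\pm = \pm\sqrt{(1+\delta)^2 - 1}\, e_1$, $B = e_2$, and $P_{i,\pm} = \tfrac12(e_2 - e_1) \pm (0.5 + 4\delta) e_{i+2}$ for $1 \le i \le k-1$. Then for all sufficiently small $\delta > 0$: (a) $|A_- - B| = |A_+ - B| = 1 + \delta$; (b) $|P_{i,+} - P_{i,-}| = 1 + 8\delta > 1 + \delta$; (c) $|P_{i,\pm} - A_+| \le 1 + \delta$, $|P_{i,\pm} - A_-| \le 1 + \delta$, and $|P_{i,\pm} - B| \le 1 + \delta$. -/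

import Mathlib

/-! The points `A_±`, `B` and `M = ½(e₂ - e₁)` lie in the plane of `e₁, e₂`, and
`P_{i,±} = M ± c e_{i+2}` with `c = ½ + 4δ`, so by Pythagoras `|P_{i,±} - X|² = |M - X|² + c²`
for `X ∈ {A_±, B}`. With `s = √((1+δ)² - 1) ≈ √(2δ)` this is at most `¾ + s + s² + 4δ + 16δ²`,
which stays below `(1+δ)² = 1 + s²` as long as `s + 4δ + 16δ² ≤ ¼`, e.g. for `δ < 1/100`. -/

open EuclideanSpace

namespace EuclideanSpace

variable {ι : Type*}

theorem smul_single_one [DecidableEq ι] (r : ι) (c : ℝ) : c • single r (1 : ℝ) = single r c := by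
  ext j; simp

variable [Fintype ι]

theorem dist_sq_eq_of_eq_off_pair {p q : ι} (hpq : p ≠ q) {x y : EuclideanSpace ℝ ι}
    (h : ∀ i, i ≠ p → i ≠ q → x i = y i) :
    dist x y ^ 2 = (x p - y p) ^ 2 + (x q - y q) ^ 2 := by
  rw [dist_sq_eq, Finset.sum_eq_add p q hpq (fun i _ hi => by simp [h i hi.1 hi.2])
    (by simp) (by simp)]
  simp [Real.dist_eq, sq_abs]

variable [DecidableEq ι]

theorem dist_add_single_sq {x y : EuclideanSpace ℝ ι} {r : ι} (h : x r = y r) (c : ℝ) :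
    dist (x + single r c) y ^ 2 = dist x y ^ 2 + c ^ 2 := by
  rw [dist_eq_norm, dist_eq_norm, add_sub_right_comm, norm_add_sq_real, inner_single_right]
  simp [h]

theorem dist_half_sub_add_single_sq {p q r : ι} (hpq : p ≠ q) (hpr : p ≠ r) (hqr : q ≠ r)
    {X : EuclideanSpace ℝ ι} (hX : ∀ i, i ≠ p → i ≠ q → X i = 0) (t : ℝ) :
    dist ((1 / 2 : ℝ) • (single q 1 - single p 1) + single r t) X ^ 2
      = (1 / 2 + X p) ^ 2 + (1 / 2 - X q) ^ 2 + t ^ 2 := by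
  rw [dist_add_single_sq (by simp [hX r hpr.symm hqr.symm, hpr.symm, hqr.symm]),
    dist_sq_eq_of_eq_off_pair hpq (fun i hip hiq => by simp [hX i hip hiq, hip, hiq])]
  simp [hpq, hpq.symm]
  ring

theorem dist_single_single {p q : ι} (hpq : p ≠ q) (a b : ℝ) :
    dist (single p a) (single q b) = √(a ^ 2 + b ^ 2) := by
  rw [← Real.sqrt_sq dist_nonneg,
    dist_sq_eq_of_eq_off_pair hpq (fun i hip hiq => by simp [hip, hiq])]
  simp [hpq, hpq.symm]

end EuclideanSpace

theorem dist_half_sub_add_single_le {ι : Type*} [Fintype ι] [DecidableEq ι] {p q r : ι}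
    (hpq : p ≠ q) (hpr : p ≠ r) (hqr : q ≠ r)
    {δ : ℝ} (hδ : 0 < δ) (hδ1 : δ < 1 / 100) {σ : ℝ} (hσ : σ ^ 2 = (1 + δ) ^ 2 - 1) {t : ℝ}
    (ht : t ^ 2 = (1 / 2 + 4 * δ) ^ 2) :
    dist ((1 / 2 : ℝ) • (single q 1 - single p 1) + single r t) (single p σ) ≤ 1 + δ ∧
      dist ((1 / 2 : ℝ) • (single q 1 - single p 1) + single r t) (single q 1) ≤ 1 + δ := by
  have hσ_small :=
    abs_lt.mp (abs_lt_of_sq_lt_sq (a := σ) (b := 3 / 20) (by nlinarith) (by norm_num))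
  rw [← pow_le_pow_iff_left₀ dist_nonneg (by linarith) two_ne_zero,
    ← pow_le_pow_iff_left₀ dist_nonneg (by linarith) two_ne_zero,
    dist_half_sub_add_single_sq hpq hpr hqr (fun i hip _ => by simp [hip]),
    dist_half_sub_add_single_sq hpq hpr hqr (fun i _ hiq => by simp [hiq]), ht]
  simp [hpq, hpq.symm]
  constructor <;> nlinarith

/-- The template `A_± = ±√((1+δ)²-1) e₁`, `B = e₂`,
`P_{i,±} = ½(e₂ - e₁) ± (0.5 + 4δ) e_{i+2}` for `1 ≤ i ≤ k-1` satisfies, for all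
sufficiently small `δ > 0`: (a) `|A_- - B| = |A_+ - B| = 1+δ`;
(b) `|P_{i,+} - P_{i,-}| = 1+8δ > 1+δ`;
(c) all distances from `P_{i,±}` to `A_+`, `A_-` and `B` are at most `1+δ`. -/
theorem stmt_9 (d k : ℕ) (hd : 2 ≤ d) (hkd : k ≤ d - 1) :
    ∃ δ0 : ℝ, 0 < δ0 ∧ ∀ δ : ℝ, 0 < δ → δ < δ0 →
      ∀ Am Ap B : EuclideanSpace ℝ (Fin d),
        Am = EuclideanSpace.single (⟨0, by omega⟩ : Fin d) (-Real.sqrt ((1 + δ) ^ 2 - 1)) →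
        Ap = EuclideanSpace.single (⟨0, by omega⟩ : Fin d) (Real.sqrt ((1 + δ) ^ 2 - 1)) →
        B = EuclideanSpace.single (⟨1, by omega⟩ : Fin d) 1 →
        ((dist Am B = 1 + δ ∧ dist Ap B = 1 + δ) ∧
        ∀ i : ℕ, 1 ≤ i → (hik : i ≤ k - 1) →
          ∀ Pp Pm : EuclideanSpace ℝ (Fin d),
            Pp = (1 / 2 : ℝ) • (EuclideanSpace.single (⟨1, by omega⟩ : Fin d) 1
                    - EuclideanSpace.single (⟨0, by omega⟩ : Fin d) 1)
                  + (0.5 + 4 * δ) • EuclideanSpace.single (⟨i + 1, by omega⟩ : Fin d) 1 →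
            Pm = (1 / 2 : ℝ) • (EuclideanSpace.single (⟨1, by omega⟩ : Fin d) 1
                    - EuclideanSpace.single (⟨0, by omega⟩ : Fin d) 1)
                  - (0.5 + 4 * δ) • EuclideanSpace.single (⟨i + 1, by omega⟩ : Fin d) 1 →
            ((dist Pp Pm = 1 + 8 * δ ∧ 1 + δ < 1 + 8 * δ) ∧
              dist Pp Ap ≤ 1 + δ ∧ dist Pp Am ≤ 1 + δ ∧ dist Pp B ≤ 1 + δ ∧
              dist Pm Ap ≤ 1 + δ ∧ dist Pm Am ≤ 1 + δ ∧ dist Pm B ≤ 1 + δ)) := by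
  refine ⟨1 / 100, by norm_num, fun δ hδ hδ1 Am Ap B hAm hAp hB => ?_⟩
  subst hAm hAp hB
  have hs2 : √((1 + δ) ^ 2 - 1) ^ 2 = (1 + δ) ^ 2 - 1 := Real.sq_sqrt (by nlinarith)
  have hpq : (⟨0, by omega⟩ : Fin d) ≠ ⟨1, by omega⟩ := by simp
  have hAB : √(√((1 + δ) ^ 2 - 1) ^ 2 + 1 ^ 2) = 1 + δ := by
    rw [hs2, one_pow, sub_add_cancel, Real.sqrt_sq (by linarith)]
  refine ⟨⟨by rw [dist_single_single hpq, neg_sq, hAB], by rw [dist_single_single hpq, hAB]⟩,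
    fun i hi hik Pp Pm hPp hPm => ?_⟩
  have hpr : (⟨0, by omega⟩ : Fin d) ≠ ⟨i + 1, by omega⟩ := by simp
  have hqr : (⟨1, by omega⟩ : Fin d) ≠ ⟨i + 1, by omega⟩ := by simp; omega
  have hc : (0.5 : ℝ) + 4 * δ = 1 / 2 + 4 * δ := by norm_num
  rw [smul_single_one, hc] at hPp
  rw [sub_eq_add_neg, ← neg_smul, smul_single_one, hc] at hPm
  subst hPp hPm
  have hPP : dist (single (⟨i + 1, by omega⟩ : Fin d) (1 / 2 + 4 * δ))
      (single ⟨i + 1, by omega⟩ (-(1 / 2 + 4 * δ))) = 1 + 8 * δ := by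
    rw [PiLp.dist_single_same, Real.dist_eq, abs_of_pos (by linarith)]
    ring
  obtain ⟨hPpAp, hPpB⟩ := dist_half_sub_add_single_le hpq hpr hqr hδ hδ1 hs2 rfl
  obtain ⟨hPpAm, -⟩ := dist_half_sub_add_single_le hpq hpr hqr hδ hδ1 ((neg_sq _).trans hs2) rfl
  obtain ⟨hPmAp, hPmB⟩ := dist_half_sub_add_single_le hpq hpr hqr hδ hδ1 hs2 (neg_sq _)
  obtain ⟨hPmAm, -⟩ := dist_half_sub_add_single_le hpq hpr hqr hδ hδ1 ((neg_sq _).trans hs2)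
    (neg_sq _)
  exact ⟨⟨by rw [dist_add_left, hPP], by linarith⟩, hPpAp, hPpAm, hPpB, hPmAp, hPmAm, hPmB⟩
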